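/- arXiv:2310.09295 — 4 statements merged into one kernel-verified Lean document; each statement's English description precedes it below -/
import Mathlib

section
/- Let r, λ, x*, α > 0 with 0 < λ/r < α. Then for all x > x*: (Γ(α)/(Γ(λ/r)·Γ(α − λ/r + 1)))·(x/x*)^{λ/r − α}·₂F₁(α − λ/r, 1 − λ/r; α − λ/r + 1; x*/x) = 1 − (Γ(α)/(Γ(λ/r + 1)·Γ(α − λ/r)))·(1 − x*/x)^{λ/r}·₂F₁(λ/r, 1 + λ/r − α; 1 + λ/r; 1 − x*/x). -/
/-- The Gauss hypergeometric function `₂F₁(a,b;c;w)` as the sum of its series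
`∑ (a)ₙ (b)ₙ / ((c)ₙ n!) wⁿ`, with `(q)ₙ` the rising factorial. -/
noncomputable def hyp2F1 (a b c w : ℝ) : ℝ :=
  ∑' n : ℕ,
    Polynomial.eval a (ascPochhammer ℝ n) * Polynomial.eval b (ascPochhammer ℝ n) /
      (Polynomial.eval c (ascPochhammer ℝ n) * (Nat.factorial n : ℝ)) * w ^ n

open Polynomial Filter Real

noncomputable def bcoef (s : ℝ) (n : ℕ) : ℝ :=
  (ascPochhammer ℝ n).eval s / n.factorial

lemma bcoef_zero (s : ℝ) : bcoef s 0 = 1 := by simp [bcoef]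

lemma asc_succ (s : ℝ) (n : ℕ) :
    (ascPochhammer ℝ (n + 1)).eval s = (ascPochhammer ℝ n).eval s * (s + n) := by
  rw [ascPochhammer_succ_right]
  simp

lemma bcoef_succ (s : ℝ) (n : ℕ) :
    bcoef s (n + 1) * (n + 1) = bcoef s n * (s + n) := by
  have h : (n.factorial : ℝ) ≠ 0 := Nat.cast_ne_zero.2 n.factorial_ne_zero
  have h2 : ((n+1).factorial : ℝ) = (n.factorial : ℝ) * (n + 1) := by
    rw [Nat.factorial_succ]; push_cast; ring
  simp only [bcoef, asc_succ, h2]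
  field_simp

/-- ratio-test helper -/
lemma summable_of_ratio_eq {f q : ℕ → ℝ} {l : ℝ}
    (hf : ∀ n, f (n + 1) = f n * q n)
    (hq : Tendsto (fun n => |q n|) atTop (nhds l)) (hl : l < 1) : Summable f := by
  have hl0 : 0 ≤ l := le_of_tendsto_of_tendsto' tendsto_const_nhds hq (fun n => abs_nonneg _)
  refine summable_of_ratio_norm_eventually_le (r := (l + 1) / 2) (by linarith) ?_
  have hev : ∀ᶠ n in atTop, |q n| ≤ (l + 1) / 2 := by
    have := hq.eventually_le_const (show l < (l+1)/2 by linarith)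
    exact this
  filter_upwards [hev] with n hn
  rw [hf n, Real.norm_eq_abs, Real.norm_eq_abs, abs_mul]
  calc |f n| * |q n| ≤ |f n| * ((l+1)/2) := by
        exact mul_le_mul_of_nonneg_left hn (abs_nonneg _)
    _ = (l+1)/2 * |f n| := by ring

lemma tendsto_ratio (c : ℝ) : Tendsto (fun n : ℕ => (c + n) / (n + 1)) atTop (nhds 1) := by
  have h : (fun n : ℕ => (c + n) / (n + 1)) = fun n : ℕ => (c - 1) * (1 / (n + 1)) + 1 := by
    funext n
    have : (n : ℝ) + 1 ≠ 0 := by positivity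
    field_simp
    ring
  rw [h]
  have := (tendsto_one_div_add_atTop_nhds_zero_nat).const_mul (c - 1)
  simpa using this.add tendsto_const_nhds

lemma summable_bcoef (s t : ℝ) (ht : |t| < 1) :
    Summable (fun n => bcoef s n * t ^ n) := by
  refine summable_of_ratio_eq (q := fun n => (s + n) / (n + 1) * t) ?_ ?_ ht
  · intro n
    have hn : (n : ℝ) + 1 ≠ 0 := by positivity
    have := bcoef_succ s n
    have h : bcoef s (n+1) = bcoef s n * (s+n) / (n+1) := by
      field_simp at this ⊢; linarith [this]
    rw [h, pow_succ]; ring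
  · have h1 : Tendsto (fun n : ℕ => |(s + n) / (n + 1) * t|) atTop (nhds |1 * t|) := by
      apply Tendsto.abs
      simpa using (tendsto_ratio s).mul_const t
    simpa using h1

lemma summable_bcoef_deriv (s t : ℝ) (ht : |t| < 1) :
    Summable (fun n => bcoef s n * (s + n) * t ^ n) := by
  refine summable_of_ratio_eq (q := fun n => (s + n + 1) / (n + 1) * t) ?_ ?_ ht
  · intro n
    have hn : (n : ℝ) + 1 ≠ 0 := by positivity
    have := bcoef_succ s n
    have h : bcoef s (n+1) = bcoef s n * (s+n) / (n+1) := by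
      field_simp at this ⊢; linarith [this]
    rw [h, pow_succ]; push_cast; ring
  · have h1 : Tendsto (fun n : ℕ => |(s + n + 1) / (n + 1) * t|) atTop (nhds |1 * t|) := by
      apply Tendsto.abs
      have : Tendsto (fun n : ℕ => (s + n + 1) / (n + 1)) atTop (nhds 1) := by
        have := tendsto_ratio (s + 1)
        simpa [add_assoc, add_comm, add_left_comm] using this
      simpa using this.mul_const t
    simpa using h1

noncomputable def bsum (s t : ℝ) : ℝ := ∑' n, bcoef s n * t ^ n

lemma hasDerivAt_bsum (s r : ℝ) (hr : r < 1) (hr0 : 0 < r) :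
    ∀ y ∈ Set.Ioo (-r) r,
      HasDerivAt (bsum s) (∑' n, bcoef s n * (n * y ^ (n - 1))) y := by
  intro y hy
  have hsum_u : Summable (fun n => |bcoef s n| * (n * r ^ (n - 1))) := by
    rw [← summable_nat_add_iff 1]
    have := (summable_bcoef_deriv s r (by rw [abs_of_pos hr0]; exact hr)).abs
    apply Summable.congr this
    intro n
    have hb := bcoef_succ s n
    have h : |bcoef s (n+1)| * ((n+1:ℕ) * r ^ n) = |bcoef s n * (s+n) * r ^ n| := by
      rw [abs_mul, ← hb, abs_mul, abs_of_pos (show (0:ℝ) < (n:ℝ)+1 by positivity),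
        abs_of_pos (pow_pos hr0 n)]
      push_cast; ring
    exact h.symm
  refine hasDerivAt_tsum_of_isPreconnected hsum_u isOpen_Ioo
    (convex_Ioo _ _).isPreconnected
    (g := fun n y => bcoef s n * y ^ n)
    (g' := fun n y => bcoef s n * (n * y ^ (n - 1)))
    (fun n z _ => ((hasDerivAt_pow n z).const_mul (bcoef s n))) ?_
    (y₀ := 0) (Set.mem_Ioo.2 ⟨by linarith, hr0⟩)
    (summable_bcoef s 0 (by simp)) hy
  · intro n z hz
    rw [Real.norm_eq_abs, abs_mul, abs_mul]
    have hz' : |z| ≤ r := by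
      rcases Set.mem_Ioo.1 hz with ⟨h1, h2⟩
      rw [abs_le]; constructor <;> linarith
    have h1 : |(n:ℝ)| = (n:ℝ) := abs_of_nonneg (by positivity)
    have h2 : |z ^ (n-1)| ≤ r ^ (n-1) := by
      rw [abs_pow]; exact pow_le_pow_left₀ (abs_nonneg z) hz' _
    rw [h1]
    apply mul_le_mul_of_nonneg_left _ (abs_nonneg _)
    exact mul_le_mul_of_nonneg_left h2 (by positivity)

lemma summable_dterm (s y : ℝ) (hy : |y| < 1) :
    Summable (fun n => bcoef s n * ((n : ℝ) * y ^ (n - 1))) := by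
  rw [← summable_nat_add_iff 1]
  apply Summable.congr (summable_bcoef_deriv s y hy)
  intro n
  have hb := bcoef_succ s n
  simp only [Nat.add_sub_cancel]
  push_cast
  calc bcoef s n * (s + n) * y ^ n = (bcoef s (n+1) * ((n:ℝ)+1)) * y ^ n := by
        rw [hb]
    _ = bcoef s (n+1) * (((n:ℝ)+1) * y ^ n) := by ring

lemma ode_bsum (s y : ℝ) (hy : |y| < 1) :
    (1 - y) * (∑' n, bcoef s n * ((n : ℝ) * y ^ (n - 1))) = s * bsum s y := by
  set f : ℕ → ℝ := fun n => bcoef s n * ((n : ℝ) * y ^ (n - 1)) with hf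
  set D := ∑' n, f n with hD
  have hDsum : HasSum f D := (summable_dterm s y hy).hasSum
  have hf0 : f 0 = 0 := by simp [hf]
  have h1 : HasSum (fun n => f (n + 1)) D := by
    rw [hasSum_nat_add_iff 1]
    simpa [hf0] using hDsum
  have heq : (fun n => f (n + 1)) = fun n => bcoef s n * (s + n) * y ^ n := by
    funext n
    have hb := bcoef_succ s n
    simp only [hf, Nat.add_sub_cancel]
    push_cast
    calc bcoef s (n+1) * (((n:ℝ)+1) * y ^ n) = (bcoef s (n+1) * ((n:ℝ)+1)) * y ^ n := by ring
      _ = bcoef s n * (s + n) * y ^ n := by rw [hb]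
  rw [heq] at h1
  have h3 : HasSum (fun n => bcoef s n * ((n : ℝ) * y ^ n)) (y * D) := by
    have h := hDsum.mul_left y
    have heq2 : (fun n => y * f n) = fun n => bcoef s n * ((n : ℝ) * y ^ n) := by
      funext n
      match n with
      | 0 => simp [hf]
      | (k+1) =>
        simp only [hf, Nat.add_sub_cancel]
        rw [pow_succ]
        ring
    rwa [heq2] at h
  have h4 : HasSum (fun n => s * (bcoef s n * y ^ n)) (D - y * D) := by
    have h := h1.sub h3
    have heq3 : (fun n => bcoef s n * (s + n) * y ^ n - bcoef s n * ((n:ℝ) * y ^ n))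
        = fun n => s * (bcoef s n * y ^ n) := by
      funext n; ring
    rwa [heq3] at h
  have h5 : HasSum (fun n => s * (bcoef s n * y ^ n)) (s * bsum s y) :=
    ((summable_bcoef s y hy).hasSum).mul_left s
  have h6 := h4.unique h5
  have h7 : (1 - y) * D = D - y * D := by ring
  rw [h7, h6]

lemma bsum_zero (s : ℝ) : bsum s 0 = 1 := by
  rw [bsum, tsum_eq_single 0 (fun n hn => by simp [zero_pow hn])]
  simp [bcoef_zero]

lemma bsum_eq (s t : ℝ) (ht : |t| < 1) : bsum s t = (1 - t) ^ (-s : ℝ) := by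
  set r := (|t| + 1) / 2 with hrdef
  have hrt : |t| < r := by rw [hrdef]; linarith
  have hr1 : r < 1 := by rw [hrdef]; linarith
  have hr0 : 0 < r := by rw [hrdef]; positivity
  set F : ℝ → ℝ := fun y => bsum s y * (1 - y) ^ (s : ℝ) with hF
  have hderiv : ∀ y ∈ Set.Ioo (-r) r, HasDerivAt F 0 y := by
    intro y hy
    rcases Set.mem_Ioo.1 hy with ⟨hy1, hy2⟩
    have hyabs : |y| < 1 := by rw [abs_lt]; constructor <;> linarith
    have hyne : (1 : ℝ) - y ≠ 0 := by linarith
    have hypos : (0 : ℝ) < 1 - y := by linarith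
    have h1 : HasDerivAt (bsum s) (∑' n, bcoef s n * ((n:ℝ) * y ^ (n - 1))) y :=
      hasDerivAt_bsum s r hr1 hr0 y hy
    have h2 : HasDerivAt (fun y : ℝ => (1 - y) ^ (s : ℝ))
        (-1 * s * (1 - y) ^ (s - 1)) y := by
      have hin : HasDerivAt (fun y : ℝ => 1 - y) (-1) y := by
        simpa using (hasDerivAt_id y).const_sub 1
      exact hin.rpow_const (Or.inl hyne)
    have h3 := h1.mul h2
    refine h3.congr_deriv ?_
    set D := ∑' n, bcoef s n * ((n:ℝ) * y ^ (n - 1)) with hD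
    have hode : (1 - y) * D = s * bsum s y := ode_bsum s y hyabs
    have hsplit : (1 - y) ^ (s : ℝ) = (1 - y) ^ (s - 1 : ℝ) * (1 - y) := by
      rw [← Real.rpow_add_one hyne]; ring_nf
    rw [hsplit]
    have : D * ((1 - y) ^ (s-1:ℝ) * (1 - y)) + bsum s y * (-1 * s * (1 - y) ^ (s-1:ℝ))
        = (1 - y) ^ (s-1:ℝ) * ((1 - y) * D - s * bsum s y) := by ring
    rw [this, hode]
    ring
  have hmem_t : t ∈ Set.Ioo (-r) r := by
    rcases abs_lt.1 hrt with ⟨h1, h2⟩; exact Set.mem_Ioo.2 ⟨h1, h2⟩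
  have hmem_0 : (0:ℝ) ∈ Set.Ioo (-r) r := Set.mem_Ioo.2 ⟨by linarith, hr0⟩
  have hconst : F t = F 0 := by
    apply (convex_Ioo (-r) r).is_const_of_fderivWithin_eq_zero
      (𝕜 := ℝ) (f := F) ?_ ?_ hmem_t hmem_0
    · intro y hy
      exact (hderiv y hy).differentiableAt.differentiableWithinAt
    · intro y hy
      rw [fderivWithin_of_isOpen isOpen_Ioo hy]
      have := (hderiv y hy).hasFDerivAt.fderiv
      rw [this]
      ext z
      simp
  have hF0 : F 0 = 1 := by simp [hF, bsum_zero]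
  have htpos : (0:ℝ) < 1 - t := by rcases abs_lt.1 ht with ⟨h1, h2⟩; linarith
  have hne : ((1:ℝ) - t) ^ (s:ℝ) ≠ 0 := (Real.rpow_pos_of_pos htpos s).ne'
  have : bsum s t * (1 - t) ^ (s:ℝ) = 1 := by
    have h := hconst.trans hF0
    simp only [hF] at h
    exact h
  rw [Real.rpow_neg htpos.le]
  field_simp at this ⊢
  linarith [this]

open MeasureTheory intervalIntegral in
lemma integral_rpow_Ioc (c u : ℝ) (hc : -1 < c) (hu0 : 0 ≤ u) :
    ∫ t in Set.Ioc (0:ℝ) u, t ^ (c : ℝ) = u ^ (c + 1) / (c + 1) := by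
  have h := integral_rpow (a := 0) (b := u) (Or.inl hc)
  rw [intervalIntegral.integral_of_le hu0] at h
  rw [h, Real.zero_rpow (by linarith : c + 1 ≠ 0)]
  ring

open MeasureTheory in
lemma integrableOn_rpow_Ioc (c u : ℝ) (hc : -1 < c) (hu0 : 0 ≤ u) :
    IntegrableOn (fun t : ℝ => t ^ (c : ℝ)) (Set.Ioc 0 u) := by
  rw [← intervalIntegrable_iff_integrableOn_Ioc_of_le hu0]
  exact intervalIntegral.intervalIntegrable_rpow' hc

open MeasureTheory in
lemma integral_left (a s u : ℝ) (ha : 0 < a) (hu0 : 0 < u) (hu1 : u < 1) :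
    ∫ t in Set.Ioc (0:ℝ) u, t ^ (a - 1 : ℝ) * (1 - t) ^ (-s : ℝ)
      = ∑' n : ℕ, bcoef s n * (u ^ (a + n : ℝ) / (a + n)) := by
  set F : ℕ → ℝ → ℝ := fun n t => bcoef s n * t ^ (a - 1 + n : ℝ) with hFdef
  have hexp : ∀ n : ℕ, (-1 : ℝ) < a - 1 + n := by
    intro n; have : (0:ℝ) ≤ n := Nat.cast_nonneg n; linarith
  have hF_int : ∀ n : ℕ, IntegrableOn (F n) (Set.Ioc (0:ℝ) u) := fun n =>
    ((integrableOn_rpow_Ioc _ u (hexp n) hu0.le).const_mul (bcoef s n))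
  have hF_val : ∀ n : ℕ, ∫ t in Set.Ioc (0:ℝ) u, F n t
      = bcoef s n * (u ^ (a + n : ℝ) / (a + n)) := by
    intro n
    rw [hFdef]
    simp only
    rw [MeasureTheory.integral_const_mul, integral_rpow_Ioc _ u (hexp n) hu0.le]
    congr 2 <;> ring
  have hF_norm : ∀ n : ℕ, ∫ t in Set.Ioc (0:ℝ) u, ‖F n t‖
      = |bcoef s n| * (u ^ (a + n : ℝ) / (a + n)) := by
    intro n
    have : ∀ t ∈ Set.Ioc (0:ℝ) u, ‖F n t‖ = |bcoef s n| * t ^ (a - 1 + n : ℝ) := by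
      intro t ht
      rw [hFdef]
      simp only [Real.norm_eq_abs, abs_mul]
      rw [abs_of_nonneg (Real.rpow_nonneg (le_of_lt ht.1) _)]
    rw [setIntegral_congr_fun measurableSet_Ioc this, MeasureTheory.integral_const_mul,
      integral_rpow_Ioc _ u (hexp n) hu0.le]
    congr 2 <;> ring
  have hF_sum : Summable (fun n => ∫ t in Set.Ioc (0:ℝ) u, ‖F n t‖) := by
    apply Summable.of_nonneg_of_le
      (fun n => by rw [hF_norm n]; positivity)
      (fun n => ?_)
      (((summable_bcoef s u (by rw [abs_of_pos hu0]; exact hu1)).abs.mul_left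
        (u ^ (a:ℝ) / a)))
    rw [hF_norm n]
    have h1 : u ^ (a + n : ℝ) = u ^ (a:ℝ) * u ^ n := by
      rw [Real.rpow_add hu0, Real.rpow_natCast]
    have h2 : (0:ℝ) < a + n := by have : (0:ℝ) ≤ n := Nat.cast_nonneg n; linarith
    have h3 : u ^ (a + n : ℝ) / (a + n) ≤ u ^ (a:ℝ) / a * u ^ n := by
      rw [h1]
      rw [div_le_iff₀ h2]
      have hua : 0 ≤ u ^ (a:ℝ) := Real.rpow_nonneg hu0.le _
      have hun : 0 ≤ u ^ n := pow_nonneg hu0.le n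
      have : u ^ (a:ℝ) / a * u ^ n * (a + n) = u ^ (a:ℝ) * u ^ n * ((a + n)/a) := by
        field_simp
      rw [this]
      have : (1:ℝ) ≤ (a + n)/a := by
        rw [le_div_iff₀ ha]; have : (0:ℝ) ≤ n := Nat.cast_nonneg n; linarith
      nlinarith [mul_nonneg hua hun]
    calc |bcoef s n| * (u ^ (a + n:ℝ) / (a + n)) ≤ |bcoef s n| * (u ^ (a:ℝ)/a * u ^ n) :=
          mul_le_mul_of_nonneg_left h3 (abs_nonneg _)
      _ = u ^ (a:ℝ)/a * (|bcoef s n| * u ^ n) := by ring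
      _ = u ^ (a:ℝ)/a * |bcoef s n * u ^ n| := by
          rw [abs_mul, abs_of_nonneg (pow_nonneg hu0.le n)]
  have key := MeasureTheory.integral_tsum_of_summable_integral_norm hF_int hF_sum
  have hptwise : ∀ t ∈ Set.Ioc (0:ℝ) u,
      (∑' n, F n t) = t ^ (a - 1 : ℝ) * (1 - t) ^ (-s : ℝ) := by
    intro t ht
    have ht0 : 0 < t := ht.1
    have ht1 : |t| < 1 := by rw [abs_of_pos ht0]; linarith [ht.2]
    have : ∀ n : ℕ, F n t = t ^ (a - 1 : ℝ) * (bcoef s n * t ^ n) := by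
      intro n
      rw [hFdef]
      simp only
      rw [Real.rpow_add ht0, Real.rpow_natCast]
      ring
    rw [tsum_congr this, tsum_mul_left]
    rw [show (∑' n, bcoef s n * t ^ n) = bsum s t from rfl, bsum_eq s t ht1]
  calc ∫ t in Set.Ioc (0:ℝ) u, t ^ (a - 1 : ℝ) * (1 - t) ^ (-s : ℝ)
      = ∫ t in Set.Ioc (0:ℝ) u, (∑' n, F n t) :=
        (setIntegral_congr_fun measurableSet_Ioc hptwise).symm
    _ = ∑' n, ∫ t in Set.Ioc (0:ℝ) u, F n t := key.symm
    _ = ∑' n : ℕ, bcoef s n * (u ^ (a + n : ℝ) / (a + n)) := tsum_congr hF_val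

open MeasureTheory in
lemma cpow_eq_ofReal (a b : ℝ) (x : ℝ) (hx : x ∈ Set.Ioc (0:ℝ) 1) :
    (x:ℂ) ^ ((a:ℂ) - 1) * ((1:ℂ) - (x:ℂ)) ^ ((b:ℂ) - 1)
      = ((x ^ (a-1:ℝ) * (1-x) ^ (b-1:ℝ) : ℝ) : ℂ) := by
  have hx0 : (0:ℝ) ≤ x := hx.1.le
  have hx1 : (0:ℝ) ≤ 1 - x := by linarith [hx.2]
  rw [Complex.ofReal_mul, Complex.ofReal_cpow hx0, Complex.ofReal_cpow hx1]
  push_cast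
  ring

open MeasureTheory in
lemma beta_intervalIntegral (a b : ℝ) :
    Complex.betaIntegral (a:ℂ) (b:ℂ)
      = ((∫ t in Set.Ioc (0:ℝ) 1, t ^ (a-1:ℝ) * (1-t) ^ (b-1:ℝ) : ℝ) : ℂ) := by
  rw [Complex.betaIntegral]
  rw [intervalIntegral.integral_of_le (by norm_num : (0:ℝ) ≤ 1)]
  rw [setIntegral_congr_fun measurableSet_Ioc (cpow_eq_ofReal a b)]
  exact integral_ofReal

open MeasureTheory in
lemma real_beta (a b : ℝ) (ha : 0 < a) (hb : 0 < b) :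
    Real.Gamma a * Real.Gamma b
      = Real.Gamma (a + b) * ∫ t in Set.Ioc (0:ℝ) 1, t ^ (a-1:ℝ) * (1-t) ^ (b-1:ℝ) := by
  have h := Complex.Gamma_mul_Gamma_eq_betaIntegral
    (s := (a:ℂ)) (t := (b:ℂ)) (by simpa using ha) (by simpa using hb)
  rw [beta_intervalIntegral a b, ← Complex.ofReal_add, Complex.Gamma_ofReal,
    Complex.Gamma_ofReal, Complex.Gamma_ofReal] at h
  exact_mod_cast h

open MeasureTheory in
lemma integrableOn_beta (a b : ℝ) (ha : 0 < a) (hb : 0 < b) :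
    IntegrableOn (fun t : ℝ => t ^ (a-1:ℝ) * (1-t) ^ (b-1:ℝ)) (Set.Ioc 0 1) := by
  have h := Complex.betaIntegral_convergent
    (u := (a:ℂ)) (v := (b:ℂ)) (by simpa using ha) (by simpa using hb)
  rw [intervalIntegrable_iff_integrableOn_Ioc_of_le (by norm_num : (0:ℝ) ≤ 1)] at h
  have h2 : IntegrableOn
      (fun x : ℝ => ((x ^ (a-1:ℝ) * (1-x) ^ (b-1:ℝ) : ℝ) : ℂ)) (Set.Ioc 0 1) := by
    apply h.congr_fun (cpow_eq_ofReal a b) measurableSet_Ioc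
  simpa [MeasureTheory.IntegrableOn] using h2.re

lemma asc_shift (a : ℝ) (n : ℕ) :
    a * (ascPochhammer ℝ n).eval (a + 1) = (ascPochhammer ℝ n).eval a * (a + n) := by
  have h1 : (ascPochhammer ℝ (n+1)).eval a = (ascPochhammer ℝ n).eval a * (a + n) :=
    asc_succ a n
  have h2 : (ascPochhammer ℝ (n+1)).eval a = a * (ascPochhammer ℝ n).eval (a + 1) := by
    rw [ascPochhammer_succ_left]
    simp [Polynomial.eval_comp]
  rw [← h1, ← h2]

open MeasureTheory in
lemma hyp_mul_rpow (a b u : ℝ) (ha : 0 < a) (hu0 : 0 < u) (hu1 : u < 1) :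
    u ^ (a:ℝ) * hyp2F1 a (1-b) (a+1) u
      = a * ∫ t in Set.Ioc (0:ℝ) u, t ^ (a-1:ℝ) * (1-t) ^ (b-1:ℝ) := by
  have hint := integral_left a (1-b) u ha hu0 hu1
  have hneg : (-(1-b):ℝ) = b - 1 := by ring
  rw [hneg] at hint
  rw [hint, hyp2F1, ← tsum_mul_left, ← tsum_mul_left]
  apply tsum_congr
  intro n
  have hposn : (0:ℝ) < a + n := by have : (0:ℝ) ≤ n := Nat.cast_nonneg n; linarith
  have hasc1 : 0 < (ascPochhammer ℝ n).eval (a+1) := ascPochhammer_pos n _ (by linarith)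
  have hfac : (0:ℝ) < (n.factorial : ℝ) := by
    exact_mod_cast Nat.factorial_pos n
  have hshift := asc_shift a n
  have hupow : u ^ (a:ℝ) * u ^ n = u ^ (a + n : ℝ) := by
    rw [Real.rpow_add hu0, Real.rpow_natCast]
  rw [bcoef]
  have heval : (ascPochhammer ℝ n).eval a
      = a * (ascPochhammer ℝ n).eval (a+1) / (a + n) := by
    field_simp
    linarith [hshift]
  rw [heval]
  field_simp
  rw [← hupow]
  ring

open MeasureTheory in
lemma reflect_integral (a b u : ℝ) (hu0 : 0 < u) (hu1 : u < 1) :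
    ∫ t in Set.Ioc (u:ℝ) 1, t ^ (a-1:ℝ) * (1-t) ^ (b-1:ℝ)
      = ∫ t in Set.Ioc (0:ℝ) (1-u), t ^ (b-1:ℝ) * (1-t) ^ (a-1:ℝ) := by
  have h := intervalIntegral.integral_comp_sub_left
    (a := u) (b := 1) (fun t : ℝ => t ^ (b-1:ℝ) * (1-t) ^ (a-1:ℝ)) 1
  rw [sub_self] at h
  rw [← intervalIntegral.integral_of_le hu1.le, ← intervalIntegral.integral_of_le
    (by linarith : (0:ℝ) ≤ 1 - u), ← h]
  apply intervalIntegral.integral_congr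
  intro x _
  simp only
  rw [sub_sub_cancel]
  ring

open MeasureTheory in
lemma split_integral (a b u : ℝ) (ha : 0 < a) (hb : 0 < b) (hu0 : 0 < u) (hu1 : u < 1) :
    (∫ t in Set.Ioc (0:ℝ) u, t ^ (a-1:ℝ) * (1-t) ^ (b-1:ℝ))
      + (∫ t in Set.Ioc (u:ℝ) 1, t ^ (a-1:ℝ) * (1-t) ^ (b-1:ℝ))
      = ∫ t in Set.Ioc (0:ℝ) 1, t ^ (a-1:ℝ) * (1-t) ^ (b-1:ℝ) := by
  rw [← Set.Ioc_union_Ioc_eq_Ioc hu0.le hu1.le]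
  rw [setIntegral_union (Set.Ioc_disjoint_Ioc_of_le le_rfl) measurableSet_Ioc
    ((integrableOn_beta a b ha hb).mono_set (Set.Ioc_subset_Ioc le_rfl hu1.le))
    ((integrableOn_beta a b ha hb).mono_set (Set.Ioc_subset_Ioc hu0.le le_rfl))]

lemma main_core (a b u : ℝ) (ha : 0 < a) (hb : 0 < b) (hu0 : 0 < u) (hu1 : u < 1) :
    Real.Gamma (a+b) / (Real.Gamma b * Real.Gamma (a+1)) * u ^ (a:ℝ)
        * hyp2F1 a (1-b) (a+1) u
      = 1 - Real.Gamma (a+b) / (Real.Gamma (b+1) * Real.Gamma a) * (1-u) ^ (b:ℝ)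
        * hyp2F1 b (1-a) (b+1) (1-u) := by
  have hGa : 0 < Real.Gamma a := Real.Gamma_pos_of_pos ha
  have hGb : 0 < Real.Gamma b := Real.Gamma_pos_of_pos hb
  have hGab : 0 < Real.Gamma (a+b) := Real.Gamma_pos_of_pos (by linarith)
  have hGa1 : Real.Gamma (a+1) = a * Real.Gamma a := Real.Gamma_add_one ha.ne'
  have hGb1 : Real.Gamma (b+1) = b * Real.Gamma b := Real.Gamma_add_one hb.ne'
  have h1 : u ^ (a:ℝ) * hyp2F1 a (1-b) (a+1) u
      = a * ∫ t in Set.Ioc (0:ℝ) u, t ^ (a-1:ℝ) * (1-t) ^ (b-1:ℝ) :=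
    hyp_mul_rpow a b u ha hu0 hu1
  have h2 : (1-u) ^ (b:ℝ) * hyp2F1 b (1-a) (b+1) (1-u)
      = b * ∫ t in Set.Ioc (0:ℝ) (1-u), t ^ (b-1:ℝ) * (1-t) ^ (a-1:ℝ) :=
    hyp_mul_rpow b a (1-u) hb (by linarith) (by linarith)
  rw [mul_assoc, h1, mul_assoc, h2, ← reflect_integral a b u hu0 hu1]
  have hsplit := split_integral a b u ha hb hu0 hu1
  have hbeta := real_beta a b ha hb
  set I1 := ∫ t in Set.Ioc (0:ℝ) u, t ^ (a-1:ℝ) * (1-t) ^ (b-1:ℝ)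
  set I2 := ∫ t in Set.Ioc (u:ℝ) 1, t ^ (a-1:ℝ) * (1-t) ^ (b-1:ℝ)
  set I3 := ∫ t in Set.Ioc (0:ℝ) 1, t ^ (a-1:ℝ) * (1-t) ^ (b-1:ℝ)
  rw [hGa1, hGb1]
  have hI3 : I3 = Real.Gamma a * Real.Gamma b / Real.Gamma (a+b) := by
    field_simp at hbeta ⊢
    linarith [hbeta]
  have hI2 : I2 = Real.Gamma a * Real.Gamma b / Real.Gamma (a+b) - I1 := by
    rw [← hI3]; linarith
  rw [hI2]
  field_simp
  ring

/-- Corollary 3.1: equivalence of the two closed forms of the uninsured trapping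
probability, for `0 < λ/r < α` and all `x > x*`. -/
theorem stmt7 (r lam xstar α : ℝ) (hr : 0 < r) (hlam : 0 < lam) (hxstar : 0 < xstar)
    (hα : 0 < α) (hcond : lam / r < α) :
    ∀ x : ℝ, xstar < x →
      Real.Gamma α / (Real.Gamma (lam / r) * Real.Gamma (α - lam / r + 1)) *
          (x / xstar) ^ (lam / r - α) *
          hyp2F1 (α - lam / r) (1 - lam / r) (α - lam / r + 1) (xstar / x) =
        1 - Real.Gamma α / (Real.Gamma (lam / r + 1) * Real.Gamma (α - lam / r)) *
          (1 - xstar / x) ^ (lam / r) *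
          hyp2F1 (lam / r) (1 + lam / r - α) (1 + lam / r) (1 - xstar / x) := by
  intro x hx
  have hx0 : 0 < x := lt_trans hxstar hx
  set p := lam / r with hp
  have hp0 : 0 < p := div_pos hlam hr
  set a := α - p with hadef
  have ha : 0 < a := by rw [hadef]; linarith
  set u := xstar / x with hu
  have hu0 : 0 < u := div_pos hxstar hx0
  have hu1 : u < 1 := (div_lt_one hx0).2 hx
  have hpow : (x / xstar) ^ (p - α : ℝ) = u ^ (a : ℝ) := by
    have h1 : x / xstar = u⁻¹ := by rw [hu]; rw [inv_div]
    rw [h1, Real.inv_rpow hu0.le, ← Real.rpow_neg hu0.le]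
    congr 1
    rw [hadef]; ring
  have e1 : (1 : ℝ) + p - α = 1 - a := by rw [hadef]; ring
  have e2 : (1 : ℝ) + p = p + 1 := by ring
  have e3 : α = a + p := by rw [hadef]; ring
  rw [hpow, e1, e2, e3]
  exact main_core a p u ha hp0 hu0 hu1
end

section
/- Let α > 0 and κ ∈ (0, 1/2). Then ∫₀¹ z^α/(1 − κ + κz) dz = (1/((α + 1)(1 − κ)))·₂F₁(1, α + 1; α + 2; −κ/(1 − κ)); consequently, for r, λ > 0, the net profit condition ∫₀¹ α z^{α−1}·log(1 − κ(1 − z)) dz + r/λ > 0 holds if and only if r/λ > (κ/((α + 1)(1 − κ)))·₂F₁(1, α + 1; α + 2; −κ/(1 − κ)). -/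
open MeasureTheory

lemma int_rpow_Ioo {p : ℝ} (hp : -1 < p) :
    ∫ z in Set.Ioo (0:ℝ) 1, z ^ p = 1 / (p + 1) := by
  have h1 : ∫ z in (0:ℝ)..1, z ^ p = ((1:ℝ) ^ (p+1) - (0:ℝ) ^ (p+1)) / (p+1) :=
    integral_rpow (Or.inl hp)
  rw [intervalIntegral.integral_of_le zero_le_one, integral_Ioc_eq_integral_Ioo] at h1
  rw [h1, Real.one_rpow, Real.zero_rpow (by linarith), sub_zero]

/-- Proposition 4.1 (Beta(α,1) case): for `α > 0`, `κ ∈ (0,1/2)`,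
`∫₀¹ z^α/(1−κ+κz) dz = (1/((α+1)(1−κ))) ₂F₁(1, α+1; α+2; −κ/(1−κ))`, and for `r, λ > 0`
the net profit condition `E[log(1 − κ(1−Z))] + r/λ > 0` holds iff
`r/λ > (κ/((α+1)(1−κ))) ₂F₁(1, α+1; α+2; −κ/(1−κ))`. -/
theorem stmt10 (α κ : ℝ) (hα : 0 < α) (hκ0 : 0 < κ) (hκ : κ < 1 / 2) :
    (∫ z in Set.Ioo (0:ℝ) 1, z ^ α / (1 - κ + κ * z) =
      (1 / ((α + 1) * (1 - κ))) * hyp2F1 1 (α + 1) (α + 2) (-κ / (1 - κ))) ∧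
    ∀ r lam : ℝ, 0 < r → 0 < lam →
      ((∫ z in Set.Ioo (0:ℝ) 1, α * z ^ (α - 1) * Real.log (1 - κ * (1 - z))) + r / lam > 0 ↔
        r / lam > (κ / ((α + 1) * (1 - κ))) * hyp2F1 1 (α + 1) (α + 2) (-κ / (1 - κ))) := by
  have h1κ : (0:ℝ) < 1 - κ := by linarith
  set w : ℝ := -κ / (1 - κ) with hwdef
  have habs : |w| = κ / (1 - κ) := by
    rw [hwdef, abs_div, abs_neg, abs_of_pos hκ0, abs_of_pos h1κ]
  have hw1 : |w| < 1 := by rw [habs, div_lt_one h1κ]; linarith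
  -- ₂F₁ as an elementary series
  have hkey : ∀ n : ℕ, (α+1) * Polynomial.eval (α+2) (ascPochhammer ℝ n)
      = Polynomial.eval (α+1) (ascPochhammer ℝ n) * (α+1+n) := by
    intro n
    induction n with
    | zero => simp
    | succ n ih =>
      rw [ascPochhammer_succ_eval, ascPochhammer_succ_eval]
      push_cast
      linear_combination (α + 2 + n) * ih
  have hF : hyp2F1 1 (α+1) (α+2) w = (α+1) * ∑' n:ℕ, w^n / (α+1+n) := by
    rw [hyp2F1, ← tsum_mul_left]
    apply tsum_congr
    intro n
    have pA : 0 < Polynomial.eval (α+1) (ascPochhammer ℝ n) :=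
      ascPochhammer_pos n _ (by linarith)
    have pB : 0 < Polynomial.eval (α+2) (ascPochhammer ℝ n) :=
      ascPochhammer_pos n _ (by linarith)
    have pn : (0:ℝ) < (Nat.factorial n : ℝ) := by positivity
    have hαn : (0:ℝ) < α + 1 + n := by positivity
    rw [ascPochhammer_eval_one]
    have hq : (Nat.factorial n : ℝ) * Polynomial.eval (α+1) (ascPochhammer ℝ n) /
        (Polynomial.eval (α+2) (ascPochhammer ℝ n) * (Nat.factorial n : ℝ))
        = (α+1)/(α+1+n) := by
      rw [div_eq_div_iff (by positivity) (by positivity)]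
      linear_combination (-(Nat.factorial n : ℝ)) * (hkey n)
    rw [hq]
    ring
  -- the elementary integral, term by term
  set F : ℕ → ℝ → ℝ := fun n z => z ^ α / (1 - κ) * (w*z)^n with hFdef
  have hFc : ∀ n : ℕ, Continuous (F n) := by
    intro n
    exact ((Real.continuous_rpow_const hα.le).div_const _).mul ((continuous_const.mul continuous_id).pow n)
  have hFint : ∀ n : ℕ, IntegrableOn (F n) (Set.Ioo (0:ℝ) 1) := fun n =>
    ((hFc n).integrableOn_Icc).mono_set Set.Ioo_subset_Icc_self
  have hIF : ∀ n : ℕ, ∫ z in Set.Ioo (0:ℝ) 1, F n z = (1-κ)⁻¹ * (w^n/(α+1+n)) := by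
    intro n
    have hαn : (0:ℝ) < α + 1 + n := by positivity
    have h1 : ∫ z in Set.Ioo (0:ℝ) 1, F n z
        = ∫ z in Set.Ioo (0:ℝ) 1, (w^n/(1-κ)) * z^(α+(n:ℝ)) := by
      apply setIntegral_congr_fun measurableSet_Ioo
      intro z hz
      simp only [hFdef]
      rw [Real.rpow_add hz.1, Real.rpow_natCast, mul_pow]
      ring
    rw [h1, integral_const_mul]
    rw [int_rpow_Ioo (by push_cast; linarith)]
    rw [div_mul_div_comm, mul_one]
    rw [eq_comm, inv_mul_eq_div, div_div]
    congr 1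
    push_cast; ring
  have hnorm : Summable fun n : ℕ => ∫ z in Set.Ioo (0:ℝ) 1, ‖F n z‖ := by
    apply Summable.of_nonneg_of_le
      (fun n => integral_nonneg fun z => norm_nonneg _)
      (fun n => ?_) ((summable_geometric_of_lt_one (abs_nonneg w) hw1).mul_left ((1-κ)⁻¹))
    have hb : ∫ z in Set.Ioo (0:ℝ) 1, ‖F n z‖ ≤ ∫ _ in Set.Ioo (0:ℝ) 1, (1-κ)⁻¹ * |w|^n := by
      apply setIntegral_mono_on ((hFint n).norm) (integrableOn_const (by simp) enorm_ne_top)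
        measurableSet_Ioo
      intro z hz
      have hz1 : (0:ℝ) ≤ z ^ α := Real.rpow_nonneg hz.1.le α
      have hz2 : z ^ α ≤ 1 := Real.rpow_le_one hz.1.le hz.2.le hα.le
      have hwz : |w| * |z| ≤ |w| := by
        rw [abs_of_pos hz.1]
        nlinarith [abs_nonneg w, hz.2]
      calc ‖F n z‖ = z ^ α / (1-κ) * (|w| * |z|)^n := by
            simp only [hFdef, norm_mul, norm_div, norm_pow, Real.norm_eq_abs,
              abs_of_nonneg hz1, abs_of_pos h1κ, abs_mul]
        _ ≤ 1 / (1-κ) * |w|^n := by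
            gcongr <;> first | positivity | exact hwz | exact hz2 | exact hz1
        _ = (1-κ)⁻¹ * |w|^n := by rw [one_div]
    refine hb.trans ?_
    rw [setIntegral_const]
    simp [Real.volume_Ioo]
  -- pointwise sum of the series
  have hsum : Set.EqOn (fun z : ℝ => z ^ α / (1 - κ + κ * z)) (fun z => ∑' n:ℕ, F n z)
      (Set.Ioo (0:ℝ) 1) := by
    intro z hz
    have hwz : ‖w*z‖ < 1 := by
      rw [Real.norm_eq_abs, abs_mul, abs_of_pos hz.1]
      nlinarith [abs_nonneg w, hz.2, hw1]
    have hwz' : w*z < 1 := lt_of_abs_lt (by rwa [Real.norm_eq_abs] at hwz)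
    have hd : 0 < 1 - κ + κ*z := by nlinarith [hz.1]
    simp only [hFdef]
    rw [tsum_mul_left, tsum_geometric_of_norm_lt_one hwz]
    rw [hwdef]
    have h1 : 1 - -κ / (1 - κ) * z = (1 - κ + κ*z)/(1-κ) := by
      field_simp
      ring
    rw [h1]
    field_simp
  -- the integral identity
  have hB : ∫ z in Set.Ioo (0:ℝ) 1, z ^ α / (1 - κ + κ * z)
      = (1-κ)⁻¹ * ∑' n:ℕ, w^n/(α+1+n) := by
    rw [setIntegral_congr_fun measurableSet_Ioo hsum,
      ← integral_tsum_of_summable_integral_norm hFint hnorm]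
    rw [← tsum_mul_left]
    exact tsum_congr hIF
  have hα1 : (0:ℝ) < α + 1 := by linarith
  have hpart1 : ∫ z in Set.Ioo (0:ℝ) 1, z ^ α / (1 - κ + κ * z) =
      (1 / ((α + 1) * (1 - κ))) * hyp2F1 1 (α + 1) (α + 2) w := by
    rw [hB, hF]
    field_simp
  refine ⟨hpart1, ?_⟩
  -- part 2 : the log integral via FTC
  have hd : ∀ z ∈ Set.Icc (0:ℝ) 1, 0 < 1 - κ + κ*z := by
    intro z hz; nlinarith [hz.1, hz.2]
  set G : ℝ → ℝ := fun z => z^α * Real.log (1-κ+κ*z) with hGdef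
  set f1 : ℝ → ℝ := fun z => α * z^(α-1) * Real.log (1-κ+κ*z) with hf1def
  set f2 : ℝ → ℝ := fun z => z^α * (κ/(1-κ+κ*z)) with hf2def
  have hGc : ContinuousOn G (Set.Icc 0 1) := by
    apply ContinuousOn.mul
    · exact (Real.continuous_rpow_const hα.le).continuousOn
    · apply ContinuousOn.log
      · fun_prop
      · intro z hz; exact (hd z hz).ne'
  have hderiv : ∀ z ∈ Set.Ioo (0:ℝ) 1, HasDerivAt G (f1 z + f2 z) z := by
    intro z hz
    have h1 : HasDerivAt (fun z:ℝ => z^α) (α * z^(α-1)) z :=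
      Real.hasDerivAt_rpow_const (Or.inl hz.1.ne')
    have h2 : HasDerivAt (fun z:ℝ => 1-κ+κ*z) κ z := by
      simpa using ((hasDerivAt_id z).const_mul κ).const_add (1-κ)
    have h3 : HasDerivAt (fun z:ℝ => Real.log (1-κ+κ*z)) (κ/(1-κ+κ*z)) z :=
      h2.log (hd z (Set.Ioo_subset_Icc_self hz)).ne'
    exact h1.mul h3
  have hf2cont : ContinuousOn f2 (Set.Icc (0:ℝ) 1) := by
    apply ContinuousOn.mul
    · exact (Real.continuous_rpow_const hα.le).continuousOn
    · exact continuousOn_const.div (by fun_prop) (fun z hz => (hd z hz).ne')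
  have hf2int : IntegrableOn f2 (Set.Ioo (0:ℝ) 1) :=
    (hf2cont.integrableOn_Icc).mono_set Set.Ioo_subset_Icc_self
  have hf1int : IntegrableOn f1 (Set.Ioo (0:ℝ) 1) := by
    have hg : IntegrableOn (fun z : ℝ => (α * -Real.log (1-κ)) * z^(α-1))
        (Set.Ioo (0:ℝ) 1) := by
      exact ((intervalIntegral.integrableOn_Ioo_rpow_iff one_pos).2 (by linarith : (-1:ℝ) < α - 1)).const_mul _
    apply Integrable.mono' hg
    · apply ContinuousOn.aestronglyMeasurable _ measurableSet_Ioo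
      apply ContinuousOn.mul
      · exact continuousOn_const.mul
          (ContinuousOn.rpow_const continuousOn_id (fun z hz => Or.inl hz.1.ne'))
      · apply ContinuousOn.log
        · fun_prop
        · intro z hz; exact (hd z (Set.Ioo_subset_Icc_self hz)).ne'
    · rw [ae_restrict_iff' measurableSet_Ioo]
      filter_upwards with z hz
      have hdz := hd z (Set.Ioo_subset_Icc_self hz)
      have hlb : Real.log (1-κ) ≤ Real.log (1-κ+κ*z) :=
        Real.log_le_log h1κ (by nlinarith [hz.1])
      have hub : Real.log (1-κ+κ*z) ≤ 0 :=
        Real.log_nonpos (by linarith) (by nlinarith [hz.2])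
      have hlogneg : Real.log (1-κ) < 0 :=
        Real.log_neg h1κ (by linarith)
      have hzp : (0:ℝ) ≤ z^(α-1) := Real.rpow_nonneg hz.1.le _
      have habs2 : |Real.log (1-κ+κ*z)| ≤ -Real.log (1-κ) :=
        abs_le.2 ⟨by linarith, by linarith⟩
      simp only [hf1def, Real.norm_eq_abs, abs_mul, abs_of_pos hα,
        abs_of_nonneg hzp]
      calc α * z^(α-1) * |Real.log (1-κ+κ*z)|
          ≤ α * z^(α-1) * (-Real.log (1-κ)) := by
            apply mul_le_mul_of_nonneg_left habs2 (by positivity)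
        _ = α * -Real.log (1-κ) * z^(α-1) := by ring
  have hG'int : IntervalIntegrable (fun z => f1 z + f2 z) volume 0 1 := by
    rw [intervalIntegrable_iff_integrableOn_Ioo_of_le zero_le_one]
    exact hf1int.add hf2int
  have hftc : ∫ z in (0:ℝ)..1, (f1 z + f2 z) = G 1 - G 0 :=
    intervalIntegral.integral_eq_sub_of_hasDerivAt_of_le zero_le_one hGc hderiv hG'int
  have hG1 : G 1 = 0 := by
    simp only [hGdef, Real.one_rpow]
    rw [show 1 - κ + κ*1 = (1:ℝ) by ring, Real.log_one, mul_zero]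
  have hG0 : G 0 = 0 := by
    simp only [hGdef]
    rw [Real.zero_rpow hα.ne', zero_mul]
  have hsplit : ∫ z in (0:ℝ)..1, (f1 z + f2 z)
      = (∫ z in Set.Ioo (0:ℝ) 1, f1 z) + ∫ z in Set.Ioo (0:ℝ) 1, f2 z := by
    rw [intervalIntegral.integral_of_le zero_le_one, integral_Ioc_eq_integral_Ioo]
    exact integral_add hf1int hf2int
  have hf2eq : ∫ z in Set.Ioo (0:ℝ) 1, f2 z
      = κ * ∫ z in Set.Ioo (0:ℝ) 1, z ^ α / (1 - κ + κ * z) := by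
    rw [← integral_const_mul]
    apply setIntegral_congr_fun measurableSet_Ioo
    intro z hz
    simp only [hf2def]
    ring
  have hJ : ∫ z in Set.Ioo (0:ℝ) 1, f1 z
      = -(κ * ∫ z in Set.Ioo (0:ℝ) 1, z ^ α / (1 - κ + κ * z)) := by
    have := hftc
    rw [hsplit, hG1, hG0, sub_zero, hf2eq] at this
    linarith
  intro r lam hr hlam
  have hrewrite : (∫ z in Set.Ioo (0:ℝ) 1, α * z ^ (α - 1) * Real.log (1 - κ * (1 - z)))
      = ∫ z in Set.Ioo (0:ℝ) 1, f1 z := by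
    apply setIntegral_congr_fun measurableSet_Ioo
    intro z hz
    simp only [hf1def]
    rw [show 1 - κ * (1 - z) = 1 - κ + κ*z by ring]
  have hκI : κ * (∫ z in Set.Ioo (0:ℝ) 1, z ^ α / (1 - κ + κ * z))
      = (κ / ((α + 1) * (1 - κ))) * hyp2F1 1 (α + 1) (α + 2) w := by
    rw [hpart1]; ring
  rw [hrewrite, hJ, ← hκI]
  constructor <;> intro h <;> linarith
end

section
/- Let r, λ, x* > 0 and κ ∈ (0,1), and let h : (0,∞) → ℝ be continuous, bounded and twice differentiable. Suppose that for all x̃ > x*κ/(1 − κ): r(x̃ + x*)·x̃·h'(x̃) − λ(x̃ + x*)·h(x̃) + (λ/κ)·∫_{(x̃ + x*)(1 − κ)}^{x̃ + x*} h(u − x*) du = 0. Then for all x̃ > x*κ/(1 − κ): x̃(x̃ + x*)·h''(x̃) + ((2 − λ/r)·x̃ + x*(1 − λ/r))·h'(x̃) + (λ(1 − κ)/(rκ))·h(x̃) = (λ(1 − κ)/(rκ))·h((1 − κ)x̃ − x*κ). -/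
/-!
The generator equation holds on the open half-line `x̃ > x*κ/(1-κ)`, so its left-hand side has
derivative zero there. Differentiating the integral term by the Leibniz rule for variable limits
produces the non-local value `h((1-κ)x̃ - x*κ)`; dividing by `r` gives the stated equation.
-/

open MeasureTheory Set Filter

theorem hasDerivAt_intervalIntegral_of_continuousOn {E : Type*} [NormedAddCommGroup E]
    [NormedSpace ℝ E] [CompleteSpace E] {f : ℝ → E} {s : Set ℝ} (hs : IsOpen s)
    (hs' : s.OrdConnected) (hf : ContinuousOn f s) {a b : ℝ → ℝ} {a' b' x : ℝ}
    (ha : HasDerivAt a a' x) (hb : HasDerivAt b b' x) (has : a x ∈ s) (hbs : b x ∈ s) :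
    HasDerivAt (fun y => ∫ t in a y..b y, f t) (b' • f (b x) - a' • f (a x)) x := by
  have hF := intervalIntegral.integral_hasFDerivAt
    (hf.mono (hs'.uIcc_subset has hbs)).intervalIntegrable
    (hf.stronglyMeasurableAtFilter hs _ has) (hf.stronglyMeasurableAtFilter hs _ hbs)
    (hf.continuousAt (hs.mem_nhds has)) (hf.continuousAt (hs.mem_nhds hbs))
  simpa [Function.comp_def] using hF.comp_hasDerivAt x (ha.prodMk hb)

theorem stmt13_general (r lam xstar κ : ℝ) (hr : 0 < r) (hxstar : 0 < xstar)
    (hκ : κ ∈ Set.Ioo (0:ℝ) 1) (h : ℝ → ℝ)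
    (hd1 : ∀ x ∈ Set.Ioi (0:ℝ), DifferentiableAt ℝ h x)
    (hd2 : ∀ x ∈ Set.Ioi (0:ℝ), DifferentiableAt ℝ (deriv h) x)
    (hgen : ∀ x : ℝ, xstar * κ / (1 - κ) < x →
      r * (x + xstar) * x * deriv h x - lam * (x + xstar) * h x +
        (lam / κ) * ∫ u in ((x + xstar) * (1 - κ))..(x + xstar), h (u - xstar) = 0) :
    ∀ x : ℝ, xstar * κ / (1 - κ) < x →
      x * (x + xstar) * deriv (deriv h) x +
          ((2 - lam / r) * x + xstar * (1 - lam / r)) * deriv h x +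
          (lam * (1 - κ) / (r * κ)) * h x =
        (lam * (1 - κ) / (r * κ)) * h ((1 - κ) * x - xstar * κ) := by
  obtain ⟨hκ0, hκ1⟩ := hκ
  intro x hx
  have hx0 : 0 < x := (div_pos (mul_pos hxstar hκ0) (by linarith)).trans hx
  -- On this region the integration range lies in `(x*, ∞)`, where `u ↦ h (u - x*)` is continuous.
  have hlow : xstar < (x + xstar) * (1 - κ) := by
    rw [div_lt_iff₀ (by linarith)] at hx
    linarith
  have hshift : ContinuousOn (fun u => h (u - xstar)) (Ioi xstar) := fun u hu =>
    ((hd1 (u - xstar) (sub_pos.2 (mem_Ioi.1 hu))).continuousAt.comp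
      (f := fun v => v - xstar) (by fun_prop)).continuousWithinAt
  have hup := (hasDerivAt_id x).add_const xstar
  have hI := hasDerivAt_intervalIntegral_of_continuousOn isOpen_Ioi ordConnected_Ioi hshift
    (hup.mul_const (1 - κ)) hup hlow (show xstar < x + xstar by linarith)
  have hG := (((hup.const_mul r).mul (hasDerivAt_id x)).mul (hd2 x hx0).hasDerivAt).sub
    ((hup.const_mul lam).mul (hd1 x hx0).hasDerivAt) |>.add (hI.const_mul (lam / κ))
  have hG0 := hG.unique <| (hasDerivAt_const x (0 : ℝ)).congr_of_eventuallyEq <|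
    eventually_of_mem (isOpen_Ioi.mem_nhds hx) hgen
  have hL : x + xstar - xstar = x := by ring
  have hR : (x + xstar) * (1 - κ) - xstar = (1 - κ) * x - xstar * κ := by ring
  simp only [id, Pi.mul_apply, smul_eq_mul, hL, hR] at hG0
  generalize h ((1 - κ) * x - xstar * κ) = hjump at hG0 ⊢
  field_simp [hr.ne', hκ0.ne'] at hG0 ⊢
  linear_combination hG0

/-- Differentiating the insured generator equation on the upper region: if a bounded,
continuous, twice differentiable `h` satisfies
`r(x̃+x*)x̃ h'(x̃) − λ(x̃+x*)h(x̃) + (λ/κ)∫_{(x̃+x*)(1−κ)}^{x̃+x*} h(u−x*) du = 0`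
for all `x̃ > x*κ/(1−κ)`, then for all such `x̃`,
`x̃(x̃+x*)h''(x̃) + ((2−λ/r)x̃ + x*(1−λ/r))h'(x̃) + (λ(1−κ)/(rκ))h(x̃)
  = (λ(1−κ)/(rκ)) h((1−κ)x̃ − x*κ)`. -/
theorem stmt13 (r lam xstar κ : ℝ) (hr : 0 < r) (hlam : 0 < lam) (hxstar : 0 < xstar)
    (hκ : κ ∈ Set.Ioo (0:ℝ) 1) (h : ℝ → ℝ)
    (hcont : ContinuousOn h (Set.Ioi 0))
    (hbdd : ∃ C : ℝ, ∀ x ∈ Set.Ioi (0:ℝ), |h x| ≤ C)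
    (hd1 : ∀ x ∈ Set.Ioi (0:ℝ), DifferentiableAt ℝ h x)
    (hd2 : ∀ x ∈ Set.Ioi (0:ℝ), DifferentiableAt ℝ (deriv h) x)
    (hgen : ∀ x : ℝ, xstar * κ / (1 - κ) < x →
      r * (x + xstar) * x * deriv h x - lam * (x + xstar) * h x +
        (lam / κ) * ∫ u in ((x + xstar) * (1 - κ))..(x + xstar), h (u - xstar) = 0) :
    ∀ x : ℝ, xstar * κ / (1 - κ) < x →
      x * (x + xstar) * deriv (deriv h) x +
          ((2 - lam / r) * x + xstar * (1 - lam / r)) * deriv h x +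
          (lam * (1 - κ) / (r * κ)) * h x =
        (lam * (1 - κ) / (r * κ)) * h ((1 - κ) * x - xstar * κ) :=
  stmt13_general r lam xstar κ hr hxstar hκ h hd1 hd2 hgen
end

section
/- Let r, λ, x* > 0 and κ ∈ (0,1), and let h : (0,∞) → ℝ be continuous, bounded and twice differentiable. Suppose that for all 0 < x̃ < x*κ/(1 − κ): r(x̃ + x*)·x̃·h'(x̃) − λ(x̃ + x*)·h(x̃) + (λ/κ)·∫_{x*}^{x̃ + x*} h(u − x*) du + λx* − λ(1 − κ)x̃/κ = 0. Then for all 0 < x̃ < x*κ/(1 − κ): x̃(x̃ + x*)·h''(x̃) + ((2 − λ/r)·x̃ + x*(1 − λ/r))·h'(x̃) + (λ(1 − κ)/(rκ))·h(x̃) = λ(1 − κ)/(rκ). -/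
/-!
After the substitution `u ↦ u - x*` the integral term is `∫₀^x̃ h`, so the generator equation
says that a differentiable function of `x̃` vanishes on the whole interval
`0 < x̃ < x*κ/(1 - κ)`. Its derivative therefore vanishes there too, and differentiating term by
term (the integral contributes `h(x̃)` by the fundamental theorem of calculus, which applies
because `h` is bounded near `0`) gives `r` times the asserted second-order equation.
-/

open MeasureTheory Set Filter Topology

lemma intervalIntegrable_of_continuousOn_Ioc_of_bounded {f : ℝ → ℝ} {a b C : ℝ} (hab : a ≤ b)
    (hf : ContinuousOn f (Ioc a b)) (hC : ∀ x ∈ Ioc a b, |f x| ≤ C) :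
    IntervalIntegrable f volume a b := by
  rw [intervalIntegrable_iff_integrableOn_Ioc_of_le hab]
  refine .of_bound measure_Ioc_lt_top (hf.aestronglyMeasurable measurableSet_Ioc) C ?_
  filter_upwards [ae_restrict_mem measurableSet_Ioc] with x hx
  exact hC x hx

lemma hasDerivAt_intervalIntegral_of_continuousOn_Ioi_of_bounded {f : ℝ → ℝ} {a x C : ℝ}
    (hx : a < x) (hf : ContinuousOn f (Ioi a)) (hC : ∀ y ∈ Ioi a, |f y| ≤ C) :
    HasDerivAt (fun y => ∫ u in a..y, f u) (f x) x :=
  intervalIntegral.integral_hasDerivAt_right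
    (intervalIntegrable_of_continuousOn_Ioc_of_bounded hx.le (hf.mono Ioc_subset_Ioi_self)
      fun y hy => hC y (Ioc_subset_Ioi_self hy))
    (AEStronglyMeasurable.stronglyMeasurableAtFilter_of_mem
      (hf.aestronglyMeasurable measurableSet_Ioi) (Ioi_mem_nhds hx))
    (hf.continuousAt (Ioi_mem_nhds hx))

/-- The left-hand side of the generator equation, with the integral shifted to start at `0`. -/
noncomputable def insuredGenerator (r lam xstar κ : ℝ) (h : ℝ → ℝ) (x : ℝ) : ℝ :=
  r * (x + xstar) * x * deriv h x - lam * (x + xstar) * h x +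
    (lam / κ) * (∫ u in (0:ℝ)..x, h u) + lam * xstar - lam * (1 - κ) * x / κ

lemma hasDerivAt_insuredGenerator {r lam xstar κ x : ℝ} {h : ℝ → ℝ} (hr : r ≠ 0) (hκ : κ ≠ 0)
    (hd1 : DifferentiableAt ℝ h x) (hd2 : DifferentiableAt ℝ (deriv h) x)
    (hI : HasDerivAt (fun y => ∫ u in (0:ℝ)..y, h u) (h x) x) :
    HasDerivAt (insuredGenerator r lam xstar κ h)
      (r * (x * (x + xstar) * deriv (deriv h) x +
          ((2 - lam / r) * x + xstar * (1 - lam / r)) * deriv h x +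
          (lam * (1 - κ) / (r * κ)) * h x - lam * (1 - κ) / (r * κ))) x := by
  have hpoly : HasDerivAt (fun y => r * (y + xstar) * y) (r * (2 * x + xstar)) x := by
    refine ((((hasDerivAt_id x).add_const xstar).const_mul r).mul (hasDerivAt_id x)).congr_deriv ?_
    simp only [id]
    ring
  have hlin : HasDerivAt (fun y => lam * (y + xstar)) lam x := by
    simpa using ((hasDerivAt_id x).add_const xstar).const_mul lam
  have hdrift : HasDerivAt (fun y => lam * (1 - κ) * y / κ) (lam * (1 - κ) / κ) x := by
    simpa using ((hasDerivAt_id x).const_mul (lam * (1 - κ))).div_const κ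
  have hsum := ((((hpoly.mul hd2.hasDerivAt).sub (hlin.mul hd1.hasDerivAt)).add
    (hI.const_mul (lam / κ))).add_const (lam * xstar)).sub hdrift
  refine hsum.congr_deriv ?_
  field_simp
  ring

theorem stmt14_general (r lam xstar κ : ℝ) (hr : 0 < r)
    (hκ : κ ∈ Set.Ioo (0:ℝ) 1) (h : ℝ → ℝ)
    (hbdd : ∃ C : ℝ, ∀ x ∈ Set.Ioi (0:ℝ), |h x| ≤ C)
    (hd1 : ∀ x ∈ Set.Ioi (0:ℝ), DifferentiableAt ℝ h x)
    (hd2 : ∀ x ∈ Set.Ioi (0:ℝ), DifferentiableAt ℝ (deriv h) x)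
    (hgen : ∀ x : ℝ, 0 < x → x < xstar * κ / (1 - κ) →
      r * (x + xstar) * x * deriv h x - lam * (x + xstar) * h x +
        (lam / κ) * (∫ u in xstar..(x + xstar), h (u - xstar)) +
        lam * xstar - lam * (1 - κ) * x / κ = 0) :
    ∀ x : ℝ, 0 < x → x < xstar * κ / (1 - κ) →
      x * (x + xstar) * deriv (deriv h) x +
          ((2 - lam / r) * x + xstar * (1 - lam / r)) * deriv h x +
          (lam * (1 - κ) / (r * κ)) * h x =
        lam * (1 - κ) / (r * κ) := by
  intro x hx hxb
  obtain ⟨C, hC⟩ := hbdd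
  have hcont : ContinuousOn h (Ioi 0) := fun y hy => (hd1 y hy).continuousAt.continuousWithinAt
  have hzero : insuredGenerator r lam xstar κ h =ᶠ[𝓝 x] fun _ => 0 := by
    filter_upwards [Ioo_mem_nhds hx hxb] with y hy
    rw [← hgen y hy.1 hy.2, insuredGenerator, intervalIntegral.integral_comp_sub_right]
    simp
  have hderiv := hasDerivAt_insuredGenerator (lam := lam) (xstar := xstar) hr.ne' hκ.1.ne' (hd1 x hx) (hd2 x hx)
    (hasDerivAt_intervalIntegral_of_continuousOn_Ioi_of_bounded hx hcont hC)
  have hflat := hderiv.unique ((hasDerivAt_const x (0:ℝ)).congr_of_eventuallyEq hzero)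
  exact sub_eq_zero.mp ((mul_eq_zero.mp hflat).resolve_left hr.ne')

/-- Differentiating the insured generator equation on the lower region: if a bounded,
continuous, twice differentiable `h` satisfies
`r(x̃+x*)x̃ h'(x̃) − λ(x̃+x*)h(x̃) + (λ/κ)∫_{x*}^{x̃+x*} h(u−x*) du + λx* − λ(1−κ)x̃/κ = 0`
for all `0 < x̃ < x*κ/(1−κ)`, then for all such `x̃`,
`x̃(x̃+x*)h''(x̃) + ((2−λ/r)x̃ + x*(1−λ/r))h'(x̃) + (λ(1−κ)/(rκ))h(x̃) = λ(1−κ)/(rκ)`. -/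
theorem stmt14 (r lam xstar κ : ℝ) (hr : 0 < r) (hlam : 0 < lam) (hxstar : 0 < xstar)
    (hκ : κ ∈ Set.Ioo (0:ℝ) 1) (h : ℝ → ℝ)
    (hcont : ContinuousOn h (Set.Ioi 0))
    (hbdd : ∃ C : ℝ, ∀ x ∈ Set.Ioi (0:ℝ), |h x| ≤ C)
    (hd1 : ∀ x ∈ Set.Ioi (0:ℝ), DifferentiableAt ℝ h x)
    (hd2 : ∀ x ∈ Set.Ioi (0:ℝ), DifferentiableAt ℝ (deriv h) x)
    (hgen : ∀ x : ℝ, 0 < x → x < xstar * κ / (1 - κ) →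
      r * (x + xstar) * x * deriv h x - lam * (x + xstar) * h x +
        (lam / κ) * (∫ u in xstar..(x + xstar), h (u - xstar)) +
        lam * xstar - lam * (1 - κ) * x / κ = 0) :
    ∀ x : ℝ, 0 < x → x < xstar * κ / (1 - κ) →
      x * (x + xstar) * deriv (deriv h) x +
          ((2 - lam / r) * x + xstar * (1 - lam / r)) * deriv h x +
          (lam * (1 - κ) / (r * κ)) * h x =
        lam * (1 - κ) / (r * κ) :=
  stmt14_general r lam xstar κ hr hκ h hbdd hd1 hd2 hgen
end
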